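/- arXiv:math/0509516 — 5 statements merged into one kernel-verified Lean document; each statement's English description precedes it below -/
import Mathlib

section
/- A nonzero R-module M is finitely embedded (embeds into the injective envelope of a finite direct sum of simple modules) if and only if the socle of M is finitely generated and M is an essential extension of its socle. -/
universe u

/-- A linear map is a pure monomorphism if it is injective and remains injective after
tensoring with every `R`-module. -/
def IsPureMono (R : Type u) [CommRing R] {M N : Type u} [AddCommGroup M] [Module R M]
    [AddCommGroup N] [Module R N] (f : M →ₗ[R] N) : Prop :=
  Function.Injective f ∧
    ∀ (L : Type u) [AddCommGroup L] [Module R L], Function.Injective (LinearMap.rTensor L f)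

/-- A module `D` is pure injective if every homomorphism into `D` extends along every
pure monomorphism. -/
def IsPureInjective (R : Type u) [CommRing R] (D : Type u) [AddCommGroup D] [Module R D] :
    Prop :=
  ∀ (M N : Type u) [AddCommGroup M] [Module R M] [AddCommGroup N] [Module R N]
    (f : M →ₗ[R] N), IsPureMono R f → ∀ g : M →ₗ[R] D, ∃ h : N →ₗ[R] D, h ∘ₗ f = g

/-- A module is finitely embedded if it embeds into the injective envelope of a direct sum
of finitely many simple modules, i.e. into an injective module which is an essential
extension of a finitely generated semisimple submodule. -/
def FinitelyEmbedded (R : Type u) [CommRing R] (M : Type u) [AddCommGroup M] [Module R M] :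
    Prop :=
  ∃ E : ModuleCat.{u} R, Module.Injective R E ∧
    ∃ S : Submodule R E, IsSemisimpleModule R S ∧ S.FG ∧
      (∀ P : Submodule R E, P ≠ ⊥ → S ⊓ P ≠ ⊥) ∧
      ∃ f : M →ₗ[R] E, Function.Injective f

/-!
An essential semisimple submodule contains every simple submodule, while every semisimple
submodule lies in the socle; so a semisimple essential submodule is the socle. Being semisimple,
finitely generated and essential pulls back along any embedding `M ↪ E` (submodules of a
finitely generated semisimple module are finitely generated), and pushes forward along an
essential embedding of `M` into an injective module.

Such an embedding exists inside any injective `E₀ ⊇ M`: take a maximal essential extension `N`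
of `M`. If `C` is maximal with `N ∩ C = 0`, every extension `φ : E₀ → E₀` of the projection
`N ⊕ C → N` has `N` essential in its range, so `φ` is a retraction onto `N` and `N` is
injective.
-/

open Module Submodule

def IsEssentialIn {α : Type*} [Lattice α] [OrderBot α] (a b : α) : Prop :=
  ∀ c ≤ b, c ≠ ⊥ → a ⊓ c ≠ ⊥

section Lattice

variable {α : Type*}

section

variable [Lattice α] [OrderBot α] {a b c : α}

theorem isEssentialIn_top_iff [OrderTop α] :
    IsEssentialIn a ⊤ ↔ ∀ c, c ≠ ⊥ → a ⊓ c ≠ ⊥ := by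
  simp [IsEssentialIn]

theorem isEssentialIn_self (a : α) : IsEssentialIn a a := fun c hc hc0 => by
  rwa [inf_eq_right.2 hc]

theorem IsEssentialIn.trans (hab : IsEssentialIn a b) (hbc : IsEssentialIn b c) :
    IsEssentialIn a c := fun d hdc hd0 =>
  ne_bot_of_le_ne_bot (hab _ inf_le_left (hbc d hdc hd0)) (inf_le_inf_left a inf_le_right)

theorem IsEssentialIn.le_of_isAtom (hab : IsEssentialIn a b) (hc : IsAtom c) (hcb : c ≤ b) :
    c ≤ a :=
  inf_eq_right.1 ((hc.le_iff.1 inf_le_right).resolve_left (hab c hcb hc.1))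

end

variable [CompleteLattice α] [IsCompactlyGenerated α]

theorem DirectedOn.isEssentialIn_sSup {a : α} {s : Set α} (hs : DirectedOn (· ≤ ·) s)
    (h : ∀ b ∈ s, IsEssentialIn a b) : IsEssentialIn a (sSup s) := by
  intro c hc hc0
  have : ⨆ b ∈ s, c ⊓ b ≠ ⊥ := by rwa [← hs.inf_sSup_eq, inf_eq_left.2 hc]
  obtain ⟨b, hb, hcb⟩ : ∃ b ∈ s, c ⊓ b ≠ ⊥ := by simpa [iSup_eq_bot] using this
  exact ne_bot_of_le_ne_bot (h b hb _ inf_le_right hcb) (inf_le_inf_left a inf_le_left)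

theorem exists_le_maximal_isEssentialIn (a : α) : ∃ m, a ≤ m ∧ Maximal (IsEssentialIn a) m :=
  zorn_le_nonempty₀ _ (fun c hc hchain _ _ => ⟨sSup c,
    hchain.directedOn.isEssentialIn_sSup hc, fun _ => le_sSup⟩) a (isEssentialIn_self a)

theorem exists_maximal_disjoint (a : α) : ∃ c, Maximal (Disjoint a) c :=
  zorn_le₀ _ fun c hc hchain => ⟨sSup c, hchain.directedOn.disjoint_sSup_right.2 hc,
    fun _ => le_sSup⟩

end Lattice

theorem Module.Injective.of_retraction.{v} {R : Type*} [Ring R] {P Q : Type v}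
    [AddCommGroup P] [Module R P] [AddCommGroup Q] [Module R Q] [Module.Injective R Q]
    (s : P →ₗ[R] Q) (r : Q →ₗ[R] P) (hrs : r ∘ₗ s = LinearMap.id) :
    Module.Injective R P where
  out _ _ _ _ _ _ f hf g := by
    obtain ⟨h, hh⟩ := Module.Injective.out f hf (s ∘ₗ g)
    exact ⟨r ∘ₗ h, fun x => by simp [hh, ← LinearMap.comp_apply r s, hrs]⟩

namespace Submodule

variable {R : Type*} [Ring R]

section Map

variable {M N : Type*} [AddCommGroup M] [Module R M] [AddCommGroup N] [Module R N]
  {f : M →ₗ[R] N}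

theorem IsEssentialIn.comap (hf : Function.Injective f) {S T : Submodule R N}
    (h : IsEssentialIn S T) : IsEssentialIn (S.comap f) (T.comap f) := by
  intro P hPT hP
  have hfP : P.map f ≠ ⊥ := fun h0 =>
    hP (map_injective_of_injective hf (h0.trans (map_bot f).symm))
  have hne := h _ (map_le_iff_le_comap.2 hPT) hfP
  rw [← comap_map_eq_of_injective hf P, ← comap_inf]
  intro h0
  apply hne
  rw [← map_comap_eq_self (inf_le_right.trans LinearMap.map_le_range), h0, map_bot]

theorem IsEssentialIn.map (hf : Function.Injective f) {S T : Submodule R M}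
    (h : IsEssentialIn S T) : IsEssentialIn (S.map f) (T.map f) := by
  intro P hPT hP
  have hP' : P.comap f ≠ ⊥ := by
    rintro h0
    apply hP
    rw [← map_comap_eq_self (hPT.trans LinearMap.map_le_range), h0, map_bot]
  have hne := h _ (by simpa [comap_map_eq_of_injective hf] using comap_mono (f := f) hPT) hP'
  rw [← map_comap_eq_self (hPT.trans LinearMap.map_le_range), ← map_inf _ hf]
  exact fun h0 => hne (map_injective_of_injective hf (h0.trans (map_bot f).symm))

end Map

variable {E : Type*} [AddCommGroup E] [Module R E] {N C : Submodule R E}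

theorem isEssentialIn_range_of_maximal_disjoint (hC : Maximal (Disjoint N) C)
    {φ : E →ₗ[R] E} (hφN : ∀ x ∈ N, φ x = x) (hφC : ∀ x ∈ C, φ x = 0) :
    IsEssentialIn N (LinearMap.range φ) := by
  intro P hP hP0
  obtain ⟨_, hyP, hy0⟩ := P.ne_bot_iff.1 hP0
  obtain ⟨x, rfl⟩ := hP hyP
  have hxC : x ∉ C := fun hx => hy0 (hφC x hx)
  have hnd : ¬Disjoint N (C ⊔ span R {x}) := fun hd =>
    hxC (hC.2 hd le_sup_left (mem_sup_right (mem_span_singleton_self x)))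
  obtain ⟨n, hnN, hnCx, hn0⟩ : ∃ n ∈ N, n ∈ C ⊔ span R {x} ∧ n ≠ 0 := by
    simpa [disjoint_def] using hnd
  obtain ⟨c, hc, _, hrx, rfl⟩ := mem_sup.1 hnCx
  obtain ⟨r, rfl⟩ := mem_span_singleton.1 hrx
  have : c + r • x = r • φ x := by rw [← hφN _ hnN, map_add, hφC c hc, zero_add, map_smul]
  exact (Submodule.ne_bot_iff _).2 ⟨_, ⟨hnN, this ▸ P.smul_mem r hyP⟩, hn0⟩

variable [Module.Injective R E]

theorem exists_linearMap_eq_self_and_eq_zero (h : Disjoint N C) :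
    ∃ φ : E →ₗ[R] E, (∀ x ∈ N, φ x = x) ∧ ∀ x ∈ C, φ x = 0 := by
  have hinj : Function.Injective (N.subtype.coprod C.subtype) := by
    rw [← LinearMap.ker_eq_bot, LinearMap.ker_coprod_of_disjoint_range] <;> simp [h]
  obtain ⟨φ, hφ⟩ := Module.Injective.out _ hinj (N.subtype ∘ₗ LinearMap.fst R N C)
  exact ⟨φ, fun x hx => by simpa using hφ (⟨x, hx⟩, 0),
    fun x hx => by simpa using hφ (0, ⟨x, hx⟩)⟩

theorem injective_of_forall_isEssentialIn_le
    (hN : ∀ L, N ≤ L → IsEssentialIn N L → L ≤ N) : Module.Injective R N := by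
  obtain ⟨C, hC⟩ := exists_maximal_disjoint N
  obtain ⟨φ, hφN, hφC⟩ := exists_linearMap_eq_self_and_eq_zero hC.prop
  have hφ : LinearMap.range φ ≤ N :=
    hN _ (fun x hx => ⟨x, hφN x hx⟩) (isEssentialIn_range_of_maximal_disjoint hC hφN hφC)
  exact .of_retraction N.subtype (φ.codRestrict N fun x => hφ ⟨x, rfl⟩) <| by
    ext x
    simp [hφN x x.2]

end Submodule

theorem Module.exists_injective_isEssentialIn_range.{v} (R : Type*) [Ring R] [Small.{v} R]
    (M : Type v) [AddCommGroup M] [Module R M] :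
    ∃ E : ModuleCat.{v} R, Module.Injective R E ∧
      ∃ f : M →ₗ[R] E, Function.Injective f ∧ IsEssentialIn (LinearMap.range f) ⊤ := by
  let E₀ := CategoryTheory.Injective.under (ModuleCat.of R M)
  have : CategoryTheory.Injective (ModuleCat.of R E₀) :=
    .of_iso (CategoryTheory.Iso.refl E₀) inferInstance
  have : Module.Injective R E₀ := injective_module_of_injective_object R E₀
  let i : M →ₗ[R] E₀ := (CategoryTheory.Injective.ι (ModuleCat.of R M)).hom
  have hi : Function.Injective i := (ModuleCat.mono_iff_injective _).1 inferInstance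
  obtain ⟨N, hiN, hN⟩ := exists_le_maximal_isEssentialIn (LinearMap.range i)
  have : Module.Injective R N :=
    injective_of_forall_isEssentialIn_le fun L hNL hL => hN.2 (hN.1.trans hL) hNL
  refine ⟨.of R N, this, i.codRestrict N fun x => hiN ⟨x, rfl⟩, by simpa using hi, ?_⟩
  simpa [LinearMap.range_codRestrict] using hN.1.comap N.injective_subtype

section Socle

variable {R : Type*} [Ring R] {M E : Type*} [AddCommGroup M] [Module R M] [AddCommGroup E]
  [Module R E]

variable (R M) in
abbrev Module.socle : Submodule R M := sSup {S : Submodule R M | IsSimpleModule R S}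

instance Module.isSemisimpleModule_socle : IsSemisimpleModule R (socle R M) := by
  rw [socle, sSup_eq_iSup]
  refine isSemisimpleModule_biSup_of_isSemisimpleModule_submodule fun T hT => ?_
  have : IsSimpleModule R T := hT
  infer_instance

theorem Submodule.le_socle {S : Submodule R M} [IsSemisimpleModule R S] : S ≤ socle R M := by
  have : (⊤ : Submodule R S) ≤ (socle R M).comap S.subtype := by
    rw [← IsSemisimpleModule.sSup_simples_eq_top R S]
    refine sSup_le fun T hT => map_le_iff_le_comap.1 (le_sSup ?_)
    have : IsSimpleModule R T := hT
    exact IsSimpleModule.congr (T.equivMapOfInjective _ S.injective_subtype).symm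
  rwa [← map_le_iff_le_comap, map_subtype_top] at this

theorem Module.socle_eq_of_isEssentialIn {S : Submodule R M} [IsSemisimpleModule R S]
    (hS : IsEssentialIn S ⊤) : socle R M = S :=
  le_antisymm (sSup_le fun _ hT => hS.le_of_isAtom (isSimpleModule_iff_isAtom.1 hT) le_top)
    le_socle

theorem Module.socle_fg_and_isEssentialIn_of_injective {S : Submodule R E}
    [IsSemisimpleModule R S] (hfg : S.FG) (hS : IsEssentialIn S ⊤) {f : M →ₗ[R] E}
    (hf : Function.Injective f) : (socle R M).FG ∧ IsEssentialIn (socle R M) ⊤ := by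
  have hess : IsEssentialIn (S.comap f) ⊤ := by simpa using hS.comap hf
  let g : S.comap f →ₗ[R] S := f.restrict fun _ h => h
  have hg : Function.Injective g := fun x y h => Subtype.ext (hf (congrArg Subtype.val h))
  have : IsSemisimpleModule R (S.comap f) := .of_injective g hg
  have : Module.Finite R S := Module.Finite.iff_fg.2 hfg
  have : IsNoetherian R (S.comap f) := isNoetherian_of_injective g hg
  rw [socle_eq_of_isEssentialIn hess]
  exact ⟨Module.Finite.iff_fg.1 inferInstance, hess⟩

end Socle

theorem finitelyEmbedded_iff_socle_general (R : Type u) [CommRing R] (M : Type u) [AddCommGroup M]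
    [Module R M] :
    FinitelyEmbedded R M ↔
      (sSup {S : Submodule R M | IsSimpleModule R S}).FG ∧
        ∀ P : Submodule R M, P ≠ ⊥ →
          sSup {S : Submodule R M | IsSimpleModule R S} ⊓ P ≠ ⊥ := by
  change _ ↔ (socle R M).FG ∧ ∀ P, P ≠ ⊥ → socle R M ⊓ P ≠ ⊥
  rw [← isEssentialIn_top_iff]
  constructor
  · rintro ⟨E, -, S, hS, hfg, hess, f, hf⟩
    exact socle_fg_and_isEssentialIn_of_injective hfg (isEssentialIn_top_iff.2 hess) hf
  · rintro ⟨hfg, hess⟩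
    obtain ⟨E, hE, f, hf, hfess⟩ := exists_injective_isEssentialIn_range R M
    refine ⟨E, hE, (socle R M).map f, .congr ((socle R M).equivMapOfInjective f hf).symm,
      hfg.map f, isEssentialIn_top_iff.1 ?_, f, hf⟩
    exact (map_top f ▸ hess.map hf).trans hfess

theorem finitelyEmbedded_iff_socle (R : Type u) [CommRing R] (M : Type u) [AddCommGroup M]
    [Module R M] [Nontrivial M] :
    FinitelyEmbedded R M ↔
      (sSup {S : Submodule R M | IsSimpleModule R S}).FG ∧
        ∀ P : Submodule R M, P ≠ ⊥ →
          sSup {S : Submodule R M | IsSimpleModule R S} ⊓ P ≠ ⊥ :=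
  finitelyEmbedded_iff_socle_general R M
end

section
/- Over a Noetherian commutative ring, every finitely embedded module is Artinian. -/
universe u

/-!
Let `S` be the finitely generated semisimple essential submodule of `E ⊇ M` and `J = Ann S`.
As `S` is essential, every associated prime of `E` contains `J`; over a Noetherian ring this makes
every element of `E` killed by a power of `J`. Since `R ⧸ J` embeds into a finite power of `S`, each
cyclic submodule of the `J`-torsion of `E` is semisimple, hence lies in the essential submodule `S`:
the `J`-torsion of `E` is `S`, which has finite length. Melkersson's criterion now applies: a module
that is `J`-power torsion, `J` finitely generated, is Artinian as soon as its `J`-torsion is. For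
`J = (a)` it follows from the uniform stabilization of the doubly antitone array
`a ^ j • N i ⊓ (0 :ₘ a)` attached to a descending chain `N i`, and in general by induction on the
generators of `J`.
-/

open Submodule Pointwise

theorem WellFoundedLT.antitone_chain_condition₂ {α : Type*} [PartialOrder α] [WellFoundedLT α]
    {X : ℕ → ℕ → α} (hX : Antitone X) (hXi : ∀ i, Antitone (X i)) :
    ∃ n, ∀ m, n ≤ m → X n = X m := by
  choose c hc using fun j => WellFoundedLT.antitone_chain_condition fun _ _ h => hX h j
  have hY : Antitone fun j => X (c j) j := fun j j' h => by
    show X (c j') j' ≤ X (c j) j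
    rw [hc j (max (c j) (c j')) (le_max_left _ _), hc j' (max (c j) (c j')) (le_max_right _ _)]
    exact hXi _ h
  obtain ⟨J, hJ⟩ := WellFoundedLT.antitone_chain_condition hY
  refine ⟨(Finset.range (J + 1)).sup c, fun m hm => funext fun j => ?_⟩
  have hcn : ∀ j ≤ J, c j ≤ (Finset.range (J + 1)).sup c := fun j hj =>
    Finset.le_sup (Finset.mem_range.mpr (Nat.lt_succ_of_le hj))
  rcases le_or_gt j J with hj | hj
  · rw [← hc j _ (hcn j hj), ← hc j _ ((hcn j hj).trans hm)]
  · refine le_antisymm ?_ (hX hm j)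
    -- past `J` the limit of column `j` is that of column `J`, already reached in row `n`
    calc X _ j ≤ X _ J := hXi _ hj.le
      _ = X (c J) J := (hc J _ (hcn J le_rfl)).symm
      _ = X (c j) j := hJ j hj.le
      _ = X (max m (c j)) j := hc j _ (le_max_right _ _)
      _ ≤ X m j := hX (le_max_left _ _) j

section Modules

variable {R M : Type*} [CommRing R] [AddCommGroup M] [Module R M]

theorem Submodule.le_of_pow_smul_inf_torsionBy_le {a : R} {N N' : Submodule R M} (hN' : N' ≤ N)
    (htor : ∀ x ∈ N, ∃ n : ℕ, a ^ n • x = 0)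
    (h : ∀ n : ℕ, a ^ n • N ⊓ torsionBy R M a ≤ a ^ n • N') : N ≤ N' := by
  suffices H : ∀ n : ℕ, ∀ x ∈ N, a ^ n • x = 0 → x ∈ N' from
    fun x hx => (htor x hx).elim fun n hn => H n x hx hn
  intro n
  induction n with
  | zero => intro x _ hx; simp_all
  | succ n ih =>
    intro x hx hax
    have hmem : a ^ n • x ∈ a ^ n • N ⊓ torsionBy R M a :=
      mem_inf.mpr ⟨smul_mem_pointwise_smul _ _ _ hx,
        by rwa [mem_torsionBy_iff, smul_smul, ← pow_succ']⟩
    obtain ⟨y, hy, hyx⟩ := (mem_smul_pointwise_iff_exists _ _ _).mp (h n hmem)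
    have hxy : x - y ∈ N' := ih _ (sub_mem hx (hN' hy)) (by rw [smul_sub, hyx, sub_self])
    simpa using add_mem hxy hy

theorem isArtinian_of_isArtinian_torsionBy {a : R} (htor : ∀ x : M, ∃ n : ℕ, a ^ n • x = 0)
    [IsArtinian R (torsionBy R M a)] : IsArtinian R M := by
  rw [← monotone_stabilizes_iff_artinian]
  intro f
  let N : ℕ → Submodule R M := fun i => OrderDual.ofDual (f i)
  have hN : Antitone N := f.monotone
  set T := torsionBy R M a
  have hX : Antitone fun i j => comap T.subtype (a ^ j • N i) :=
    fun i i' h j => comap_mono (smul_mono_right _ (hN h))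
  have hXi : ∀ i, Antitone fun j => comap T.subtype (a ^ j • N i) := fun i j j' h => by
    refine comap_mono ?_
    rw [← Nat.add_sub_cancel' h, pow_add, mul_smul]
    exact smul_mono_right _ (smul_le_self_of_tower _ _)
  obtain ⟨n, hn⟩ := WellFoundedLT.antitone_chain_condition₂ hX hXi
  refine ⟨n, fun m hm => congrArg OrderDual.toDual (show N n = N m from ?_)⟩
  refine le_antisymm (le_of_pow_smul_inf_torsionBy_le (hN hm) (fun x _ => htor x) fun j => ?_)
    (hN hm)
  have := congrArg (map T.subtype) (congrFun (hn m hm) j)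
  simp only [map_comap_subtype] at this
  rw [inf_comm, this]
  exact inf_le_right

theorem Submodule.mem_torsionBySet_iff_le_torsionOf {I : Ideal R} {x : M} :
    x ∈ torsionBySet R M I ↔ I ≤ Ideal.torsionOf R M x := by
  simp [SetLike.le_def, Ideal.mem_torsionOf_iff]

theorem Submodule.torsionOf_coe (N : Submodule R M) (x : N) :
    Ideal.torsionOf R M x = Ideal.torsionOf R N x := by
  ext r
  simp only [Ideal.mem_torsionOf_iff, ← coe_smul, coe_eq_zero]

theorem isArtinian_of_isArtinian_torsionBySet (I : Ideal R) (hI : I.FG)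
    (htor : ∀ x : M, ∃ n : ℕ, I ^ n ≤ Ideal.torsionOf R M x)
    [IsArtinian R (torsionBySet R M I)] : IsArtinian R M := by
  induction I, hI using Submodule.fg_induction generalizing M with
  | singleton a =>
    have : IsArtinian R (torsionBy R M a) := torsionBySet_span_singleton_eq (M := M) a ▸ ‹_›
    refine isArtinian_of_isArtinian_torsionBy (a := a) fun x => (htor x).imp fun n hn => ?_
    exact (Ideal.mem_torsionOf_iff x _).mp (hn (Ideal.pow_mem_pow (mem_span_singleton_self a) n))
  | sup I₁ I₂ _ _ ih₁ ih₂ =>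
    set V := torsionBySet R M I₁
    have : IsArtinian R (torsionBySet R V I₂) := by
      let f : torsionBySet R V I₂ →ₗ[R] torsionBySet R M ↑(I₁ ⊔ I₂) :=
        LinearMap.codRestrict _ (V.subtype ∘ₗ (torsionBySet R V I₂).subtype) fun y => by
          rw [mem_torsionBySet_iff_le_torsionOf]
          refine sup_le (mem_torsionBySet_iff_le_torsionOf.mp y.1.2) ?_
          rw [LinearMap.comp_apply, subtype_apply, subtype_apply, torsionOf_coe]
          exact mem_torsionBySet_iff_le_torsionOf.mp y.2
      exact isArtinian_of_injective f fun y z h => Subtype.ext (Subtype.ext congr($h.1))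
    have : IsArtinian R V := ih₂ (fun x => (htor x).imp fun n hn => by
      rw [← torsionOf_coe]
      exact (Ideal.pow_right_mono le_sup_right n).trans hn)
    exact ih₁ fun x => (htor x).imp fun n hn => (Ideal.pow_right_mono le_sup_left n).trans hn

def Submodule.IsEssential (S : Submodule R M) : Prop :=
  ∀ P : Submodule R M, P ≠ ⊥ → S ⊓ P ≠ ⊥

theorem Submodule.IsEssential.annihilator_le_of_mem_associatedPrimes [IsNoetherianRing R]
    {S : Submodule R M} (hS : S.IsEssential) {p : Ideal R} (hp : p ∈ associatedPrimes R M) :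
    S.annihilator ≤ p := by
  obtain ⟨hprime, w, rfl⟩ := isAssociatedPrime_iff.mp hp
  have hw : w ≠ 0 := by
    rintro rfl
    exact hprime.ne_top (by ext; simp [mem_colon_singleton])
  obtain ⟨z, ⟨hzS, hzw⟩, hz⟩ :=
    exists_mem_ne_zero_of_ne_bot (hS _ (span_singleton_eq_bot.not.mpr hw))
  obtain ⟨r, rfl⟩ := mem_span_singleton.mp hzw
  have hr : r ∉ colon ⊥ {w} := by simpa [mem_colon_singleton] using hz
  intro b hb
  have hbr : b * r ∈ colon ⊥ {w} := by
    simpa [mem_colon_singleton, mul_smul] using mem_annihilator.mp hb _ hzS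
  exact (hprime.mem_or_mem hbr).resolve_right hr

theorem Ideal.exists_pow_le_torsionOf_of_le_associatedPrimes [IsNoetherianRing R] {J : Ideal R}
    (hJ : ∀ p ∈ associatedPrimes R M, J ≤ p) (x : M) :
    ∃ n : ℕ, J ^ n ≤ Ideal.torsionOf R M x := by
  have hmin : ∀ p ∈ (Module.annihilator R (R ∙ x)).minimalPrimes, J ≤ p := fun p hp =>
    hJ p (associatedPrimes.subset_of_injective (R ∙ x).injective_subtype
      (Module.associatedPrimes.minimalPrimes_annihilator_subset_associatedPrimes _ _ hp))
  obtain ⟨n, hn⟩ := Ideal.exists_pow_le_of_le_radical_of_fg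
    (by rw [← Ideal.sInf_minimalPrimes]; exact le_sInf hmin) (IsNoetherian.noetherian J)
  exact ⟨n, hn.trans (annihilator_span_singleton_eq_torsionOf x).le⟩

theorem isSemisimpleModule_quotient_annihilator [Module.Finite R M] [IsSemisimpleModule R M] :
    IsSemisimpleModule R (R ⧸ Module.annihilator R M) := by
  obtain ⟨n, s, hs⟩ := Module.Finite.exists_fin (R := R) (M := M)
  let g : R →ₗ[R] (Fin n → M) := LinearMap.pi fun i => LinearMap.toSpanSingleton R M (s i)
  have hker : LinearMap.ker g = Module.annihilator R M := by
    rw [LinearMap.ker_pi, ← annihilator_top, ← hs, annihilator_span]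
    exact (iInf_range' (fun m => LinearMap.ker (LinearMap.toSpanSingleton R M m)) s).symm
  exact .congr ((quotEquivOfEq _ _ hker.symm).trans g.quotKerEquivRange)

theorem Submodule.IsEssential.le_of_isSemisimpleModule {S N : Submodule R M} (hS : S.IsEssential)
    [IsSemisimpleModule R N] : N ≤ S := by
  obtain ⟨C, hC⟩ := ComplementedLattice.exists_isCompl (S.comap N.subtype)
  have hCS : S ⊓ map N.subtype C = ⊥ := by
    rw [eq_bot_iff]
    rintro _ ⟨hcS, c, hc, rfl⟩
    have : c ∈ S.comap N.subtype ⊓ C := ⟨hcS, hc⟩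
    simpa [hC.inf_eq_bot] using this
  have hC : C = ⊥ := by
    by_contra h
    refine hS _ (fun h' => h ?_) hCS
    exact map_injective_of_injective N.injective_subtype (h'.trans (map_bot _).symm)
  exact comap_subtype_eq_top.mp (eq_top_of_isCompl_bot (hC ▸ ‹_›))

theorem Submodule.IsEssential.torsionBySet_annihilator_le {S : Submodule R M} (hS : S.IsEssential)
    [Module.Finite R S] [IsSemisimpleModule R S] : torsionBySet R M S.annihilator ≤ S := by
  intro x hx
  have := isSemisimpleModule_quotient_annihilator (R := R) (M := S)
  let f := S.annihilator.liftQ (LinearMap.toSpanSingleton R M x)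
    (mem_torsionBySet_iff_le_torsionOf.mp hx)
  have : IsSemisimpleModule R (R ∙ x) := by
    rw [LinearMap.span_singleton_eq_range, ← range_liftQ]
    exact IsSemisimpleModule.range f
  exact hS.le_of_isSemisimpleModule (mem_span_singleton_self x)

end Modules

theorem finitelyEmbedded_isArtinian (R : Type u) [CommRing R] [IsNoetherianRing R]
    (M : Type u) [AddCommGroup M] [Module R M] (h : FinitelyEmbedded R M) :
    IsArtinian R M := by
  obtain ⟨E, -, S, hss, hfg, hess, f, hf⟩ := h
  suffices IsArtinian R E from isArtinian_of_injective f hf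
  have hS : S.IsEssential := hess
  have : Module.Finite R S := Module.Finite.iff_fg.mpr hfg
  have : IsArtinian R (torsionBySet R E S.annihilator) :=
    isArtinian_of_le hS.torsionBySet_annihilator_le
  exact isArtinian_of_isArtinian_torsionBySet S.annihilator (IsNoetherian.noetherian _)
    (Ideal.exists_pow_le_torsionOf_of_le_associatedPrimes fun _ =>
      hS.annihilator_le_of_mem_associatedPrimes)
end

section
/- Every Artinian module over a commutative Noetherian ring is pure injective. -/
universe u

/-!
Artinian modules are linearly compact: cosets of submodules with the finite intersection property
have a common point, because a minimal finite intersection of the submodules lies in all of them.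

Given a pure monomorphism `f : A → B` and `g : A → D`, extend `g ∘ f⁻¹` by Zorn's lemma among the
partial maps `B ⇀ D` that send every finite linear system with constants in their domain which is
solvable in `B` to a system solvable in `D`; purity makes `g ∘ f⁻¹` such a map. To extend such a
map to a new element `b`, each finite system in which `b` occurs as the value of one unknown
constrains the image `d` of `b` to a coset of a submodule of `D`. These cosets have the finite
intersection property, so for `D` Artinian one `d` satisfies all of them at once.
-/

theorem IsArtinian.exists_forall_sub_mem {R M ι : Type*} [Ring R] [AddCommGroup M] [Module R M]
    [IsArtinian R M] (N : ι → Submodule R M) (c : ι → M)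
    (H : ∀ t : Finset ι, ∃ x, ∀ i ∈ t, x - c i ∈ N i) : ∃ x, ∀ i, x - c i ∈ N i := by
  classical
  obtain ⟨_, ⟨t, rfl⟩, hmin⟩ :=
    IsArtinian.set_has_minimal (Set.range fun t : Finset ι => t.inf N) ⟨_, ∅, rfl⟩
  obtain ⟨x, hx⟩ := H t
  refine ⟨x, fun i => ?_⟩
  obtain ⟨x', hx'⟩ := H (insert i t)
  have heq : (insert i t).inf N = t.inf N :=
    (Finset.inf_mono (Finset.subset_insert i t)).eq_of_not_lt (hmin _ ⟨_, rfl⟩)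
  have hxx' : x - x' ∈ (insert i t).inf N := by
    rw [heq, Submodule.mem_finsetInf]
    intro j hj
    simpa using sub_mem (hx j hj) (hx' j (Finset.mem_insert_of_mem hj))
  simpa using add_mem (Submodule.mem_finsetInf.mp hxx' i (Finset.mem_insert_self i t))
    (hx' i (Finset.mem_insert_self i t))

section TensorSolvability

open TensorProduct LinearMap

variable {R : Type*} [CommRing R] {ι κ : Type*} [Fintype ι] [DecidableEq ι] [Fintype κ]
  [DecidableEq κ]

theorem piScalarRight_rTensor {M N : Type*} [AddCommGroup M] [Module R M] [AddCommGroup N]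
    [Module R N] (f : M →ₗ[R] N) (u : M ⊗[R] (ι → R)) :
    piScalarRight R R N ι (rTensor (ι → R) f u) = f ∘ piScalarRight R R M ι u := by
  induction u using TensorProduct.induction_on with
  | zero => ext; simp
  | tmul m v => ext; simp
  | add u v hu hv => ext k; simp_all [funext_iff]

theorem piScalarRight_lTensor_mulVecLin {M : Type*} [AddCommGroup M] [Module R M]
    (r : κ → ι → R) (u : M ⊗[R] (ι → R)) (j : κ) :
    piScalarRight R R M κ (lTensor M (Matrix.of r).mulVecLin u) j =
      ∑ k, r j k • piScalarRight R R M ι u k := by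
  induction u using TensorProduct.induction_on with
  | zero => simp
  | tmul m v => simp [Matrix.mulVec, dotProduct, Finset.sum_smul, mul_smul]
  | add u v hu hv => simp_all [Finset.sum_add_distrib]

theorem LinearMap.exists_sum_smul_eq_of_rTensor_injective {R : Type u} {A B : Type*}
    [CommRing R] [AddCommGroup A] [Module R A] [AddCommGroup B] [Module R B] (f : A →ₗ[R] B)
    (hf : ∀ (L : Type u) [AddCommGroup L] [Module R L], Function.Injective (rTensor L f))
    {ι κ : Type} [Fintype ι] [Fintype κ] (r : κ → ι → R) (a : κ → A) (x : ι → B)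
    (hx : ∀ j, ∑ k, r j k • x k = f (a j)) : ∃ y : ι → A, ∀ j, ∑ k, r j k • y k = a j := by
  classical
  -- With `L` the cokernel of `r`, the system `r • y = a` is solvable in a module `M` iff `a`
  -- vanishes in `M ⊗ L`; injectivity of `f ⊗ L` carries this from `B` back to `A`.
  let φ := (Matrix.of r).mulVecLin
  let π := (range φ).mkQ
  have hφπ : Function.Exact φ π := exact_map_mkQ_range φ
  have hfa : rTensor (κ → R) f ((piScalarRight R R A κ).symm a) =
      lTensor B φ ((piScalarRight R R B ι).symm x) := by
    apply (piScalarRight R R B κ).injective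
    ext j
    rw [piScalarRight_rTensor, piScalarRight_lTensor_mulVecLin]
    simp [hx]
  have key : lTensor A π ((piScalarRight R R A κ).symm a) = 0 := by
    apply hf _
    rw [map_zero, ← LinearMap.comp_apply, rTensor_comp_lTensor, ← lTensor_comp_rTensor,
      LinearMap.comp_apply, hfa]
    exact (lTensor_exact B hφπ (Submodule.mkQ_surjective _)).apply_apply_eq_zero _
  obtain ⟨u, hu⟩ := (lTensor_exact A hφπ (Submodule.mkQ_surjective _) _).mp key
  refine ⟨piScalarRight R R A ι u, fun j => ?_⟩
  rw [← piScalarRight_lTensor_mulVecLin, hu, LinearEquiv.apply_symm_apply]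

end TensorSolvability

namespace LinearPMap

variable {R B D : Type*} [CommRing R] [AddCommGroup B] [Module R B] [AddCommGroup D] [Module R D]

def PreservesSolvability (h : B →ₗ.[R] D) : Prop :=
  ∀ (ι κ : Type) [Fintype ι] [Fintype κ] (r : κ → ι → R) (c : κ → h.domain),
    (∃ x : ι → B, ∀ j, ∑ k, r j k • x k = c j) → ∃ y : ι → D, ∀ j, ∑ k, r j k • y k = h (c j)

end LinearPMap

/-- A finite linear system `∑ k, r j k • x k + s j • z = c j` with constants in `C`, solvable in
`B` with the unknown `z` pinned to `b`. -/
structure PinnedSystem {R B : Type*} [CommRing R] [AddCommGroup B] [Module R B]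
    (C : Submodule R B) (b : B) where
  ι : Type
  κ : Type
  [fintypeι : Fintype ι]
  [fintypeκ : Fintype κ]
  r : κ → ι → R
  s : κ → R
  c : κ → C
  solvable : ∃ x : ι → B, ∀ j, ∑ k, r j k • x k + s j • b = c j

attribute [instance] PinnedSystem.fintypeι PinnedSystem.fintypeκ

namespace PinnedSystem

variable {R B : Type*} [CommRing R] [AddCommGroup B] [Module R B] {C : Submodule R B} {b : B}
  (σ : PinnedSystem C b) (D : Type*) [AddCommGroup D] [Module R D]

def lhs : (σ.ι → D) × D →ₗ[R] σ.κ → D :=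
  LinearMap.pi fun j =>
    ∑ k, σ.r j k • (LinearMap.proj k ∘ₗ LinearMap.fst R _ D) + σ.s j • LinearMap.snd R _ D

@[simp]
theorem lhs_apply (y : σ.ι → D) (e : D) (j : σ.κ) :
    σ.lhs D (y, e) j = ∑ k, σ.r j k • y k + σ.s j • e := by
  simp [lhs]

variable {σ D}

def Admits (v : σ.κ → D) (e : D) : Prop :=
  ∃ y : σ.ι → D, ∀ j, ∑ k, σ.r j k • y k + σ.s j • e = v j

variable (σ D) in
def direction : Submodule R D :=
  (LinearMap.ker (σ.lhs D)).map (LinearMap.snd R _ D)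

theorem Admits.sub_mem_direction {v : σ.κ → D} {e e' : D} (he : σ.Admits v e)
    (he' : σ.Admits v e') : e' - e ∈ σ.direction D := by
  obtain ⟨y, hy⟩ := he
  obtain ⟨y', hy'⟩ := he'
  refine ⟨(y' - y, e' - e), funext fun j => ?_, rfl⟩
  simp only [lhs_apply, Pi.sub_apply, smul_sub, Finset.sum_sub_distrib, Pi.zero_apply]
  rw [sub_add_sub_comm, hy, hy', sub_self]

theorem Admits.add_mem_direction {v : σ.κ → D} {e d : D} (he : σ.Admits v e)
    (hd : d ∈ σ.direction D) : σ.Admits v (e + d) := by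
  obtain ⟨y, hy⟩ := he
  obtain ⟨⟨z, d⟩, hz, rfl⟩ := hd
  refine ⟨y + z, fun j => ?_⟩
  have hzj : ∑ k, σ.r j k • z k + σ.s j • d = 0 := by
    simpa using congrFun (LinearMap.mem_ker.mp hz) j
  simp only [Pi.add_apply, smul_add, Finset.sum_add_distrib, LinearMap.snd_apply]
  rw [add_add_add_comm, hy, hzj, add_zero]

def append (σ₁ σ₂ : PinnedSystem C b) : PinnedSystem C b where
  ι := σ₁.ι ⊕ σ₂.ι
  κ := σ₁.κ ⊕ σ₂.κ
  r := Sum.elim (fun j => Sum.elim (σ₁.r j) 0) fun j => Sum.elim 0 (σ₂.r j)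
  s := Sum.elim σ₁.s σ₂.s
  c := Sum.elim σ₁.c σ₂.c
  solvable := by
    obtain ⟨x₁, hx₁⟩ := σ₁.solvable
    obtain ⟨x₂, hx₂⟩ := σ₂.solvable
    refine ⟨Sum.elim x₁ x₂, Sum.rec (fun j => ?_) fun j => ?_⟩
    · simpa [Fintype.sum_sum_type] using hx₁ j
    · simpa [Fintype.sum_sum_type] using hx₂ j

theorem Admits.of_append {σ₁ σ₂ : PinnedSystem C b} {v₁ : σ₁.κ → D} {v₂ : σ₂.κ → D} {e : D}
    (he : (σ₁.append σ₂).Admits (Sum.elim v₁ v₂) e) : σ₁.Admits v₁ e ∧ σ₂.Admits v₂ e := by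
  obtain ⟨y, hy⟩ := he
  refine ⟨⟨fun k => y (.inl k), fun j => ?_⟩, ⟨fun k => y (.inr k), fun j => ?_⟩⟩
  · have hj := hy (.inl j)
    -- `erw`: the `Fintype` instance on `(σ₁.append σ₂).ι` is `instFintypeSum` only after unfolding
    erw [Fintype.sum_sum_type] at hj
    simpa [append] using hj
  · have hj := hy (.inr j)
    erw [Fintype.sum_sum_type] at hj
    simpa [append] using hj

theorem exists_admits_imp_forall_mem (g : C → D)
    {t : Finset (PinnedSystem C b)} (ht : t.Nonempty) :
    ∃ τ : PinnedSystem C b, ∀ d, τ.Admits (g ∘ τ.c) d → ∀ σ ∈ t, σ.Admits (g ∘ σ.c) d := by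
  induction ht using Finset.Nonempty.cons_induction with
  | singleton σ => exact ⟨σ, fun d hd _ hσ => Finset.mem_singleton.mp hσ ▸ hd⟩
  | cons σ t _ _ ih =>
    obtain ⟨τ, hτ⟩ := ih
    refine ⟨σ.append τ, fun d hd ρ hρ => ?_⟩
    obtain ⟨hσ, hτd⟩ := Admits.of_append (Sum.comp_elim g σ.c τ.c ▸ hd)
    rcases Finset.mem_cons.mp hρ with rfl | hρ
    exacts [hσ, hτ d hτd ρ hρ]

end PinnedSystem

namespace LinearPMap

variable {R B D : Type*} [CommRing R] [AddCommGroup B] [Module R B] [AddCommGroup D] [Module R D]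
  {h : B →ₗ.[R] D}

theorem PreservesSolvability.exists_admits (hh : h.PreservesSolvability) {b : B}
    (σ : PinnedSystem h.domain b) : ∃ e, σ.Admits (h ∘ σ.c) e := by
  obtain ⟨x, hx⟩ := σ.solvable
  obtain ⟨y, hy⟩ := hh (σ.ι ⊕ Unit) σ.κ (fun j => Sum.elim (σ.r j) fun _ => σ.s j) σ.c
    ⟨Sum.elim x fun _ => b, fun j => by simpa [Fintype.sum_sum_type] using hx j⟩
  exact ⟨y (.inr ()), fun k => y (.inl k), fun j => by simpa [Fintype.sum_sum_type] using hy j⟩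

theorem PreservesSolvability.exists_forall_admits [IsArtinian R D]
    (hh : h.PreservesSolvability) (b : B) :
    ∃ d, ∀ σ : PinnedSystem h.domain b, σ.Admits (h ∘ σ.c) d := by
  choose e he using hh.exists_admits (b := b)
  have hfin (t : Finset (PinnedSystem h.domain b)) :
      ∃ x, ∀ σ ∈ t, x - e σ ∈ σ.direction D := by
    rcases t.eq_empty_or_nonempty with rfl | ht
    · exact ⟨0, by simp⟩
    obtain ⟨τ, hτ⟩ := PinnedSystem.exists_admits_imp_forall_mem h ht
    obtain ⟨d, hd⟩ := hh.exists_admits τ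
    exact ⟨d, fun σ hσ => (he σ).sub_mem_direction (hτ d hd σ hσ)⟩
  obtain ⟨d, hd⟩ := IsArtinian.exists_forall_sub_mem _ e hfin
  exact ⟨d, fun σ => by simpa using (he σ).add_mem_direction (hd σ)⟩

theorem exists_le_mem_domain_of_smul_eq (b : B) (d : D)
    (hd : ∀ (t : R) (ht : t • b ∈ h.domain), h ⟨t • b, ht⟩ = t • d) :
    ∃ h' : B →ₗ.[R] D, h ≤ h' ∧ b ∈ h'.domain ∧
      ∀ x : h'.domain, ∃ (u : h.domain) (t : R), (u : B) + t • b = x ∧ h' x = h u + t • d := by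
  have H0 (t : R) (ht : t • b = 0) : t • d = 0 := by
    rw [← hd t (ht ▸ h.domain.zero_mem), ← h.map_zero]
    exact congrArg h (Subtype.ext ht)
  let g := mkSpanSingleton' (σ := RingHom.id R) b d H0
  have agree (x : h.domain) (y : g.domain) (hxy : (x : B) = y) : h x = g y := by
    obtain ⟨y, hy⟩ := y
    obtain ⟨t, rfl⟩ := Submodule.mem_span_singleton.mp hy
    have hxb : (x : B) = t • b := hxy
    rw [mkSpanSingleton'_apply b d H0 t hy, RingHom.id_apply, ← hd t (hxb ▸ x.2)]
    exact congrArg h (Subtype.ext hxb)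
  refine ⟨h.sup g agree, h.left_le_sup g agree,
    Submodule.mem_sup_right (Submodule.mem_span_singleton_self b), fun x => ?_⟩
  obtain ⟨u, hu, v, hv, huv⟩ := Submodule.mem_sup.mp x.2
  obtain ⟨t, rfl⟩ := Submodule.mem_span_singleton.mp hv
  refine ⟨⟨u, hu⟩, t, huv, ?_⟩
  rw [sup_apply agree ⟨u, hu⟩ ⟨t • b, hv⟩ x huv, mkSpanSingleton'_apply b d H0 t hv,
    RingHom.id_apply]

theorem exists_le_preservesSolvability_of_forall_admits {b : B} {d : D}
    (hd : ∀ σ : PinnedSystem h.domain b, σ.Admits (h ∘ σ.c) d) :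
    ∃ h' : B →ₗ.[R] D, h'.PreservesSolvability ∧ h ≤ h' ∧ b ∈ h'.domain := by
  have hsmul (t : R) (ht : t • b ∈ h.domain) : h ⟨t • b, ht⟩ = t • d := by
    -- the single equation `t • z = t • b`
    obtain ⟨y, hy⟩ :=
      hd ⟨Empty, Unit, 0, fun _ => t, fun _ => ⟨t • b, ht⟩, ⟨Empty.elim, by simp⟩⟩
    simpa using (hy ()).symm
  obtain ⟨h', hle, hb, hdecomp⟩ := exists_le_mem_domain_of_smul_eq b d hsmul
  refine ⟨h', fun ι κ _ _ r c ⟨x, hx⟩ => ?_, hle, hb⟩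
  choose u t hut hh'u using fun j => hdecomp (c j)
  obtain ⟨y, hy⟩ := hd ⟨ι, κ, r, -t, u, x, fun j => by
    rw [Pi.neg_apply, neg_smul, ← sub_eq_add_neg, hx, ← hut, add_sub_cancel_right]⟩
  refine ⟨y, fun j => ?_⟩
  have hyj : ∑ k, r j k • y k - t j • d = h (u j) := by
    simpa [sub_eq_add_neg] using hy j
  rw [hh'u, ← hyj, sub_add_cancel]

theorem PreservesSolvability.sSup {c : Set (B →ₗ.[R] D)} (hne : c.Nonempty)
    (hc : DirectedOn (· ≤ ·) c) (hsol : ∀ h ∈ c, PreservesSolvability h) :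
    (LinearPMap.sSup c hc).PreservesSolvability := by
  classical
  intro ι κ _ _ r v hv
  have : Nonempty c := hne.to_subtype
  choose g hg using fun j => (mem_domain_sSup_iff hne hc).mp (v j).2
  obtain ⟨g₀, hg₀⟩ := (directedOn_iff_directed.mp hc).finset_le
    (Finset.univ.image fun j => (⟨g j, (hg j).1⟩ : c))
  have hle (j : κ) : g j ≤ g₀ :=
    hg₀ ⟨g j, (hg j).1⟩ (Finset.mem_image_of_mem _ (Finset.mem_univ j))
  obtain ⟨y, hy⟩ := hsol g₀ g₀.2 ι κ r (fun j => ⟨v j, (hle j).1 (hg j).2⟩) hv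
  exact ⟨y, fun j => (hy j).trans (LinearPMap.sSup_apply hc g₀.2 _).symm⟩

theorem PreservesSolvability.exists_linearMap_extends [IsArtinian R D]
    (hh : h.PreservesSolvability) : ∃ H : B →ₗ[R] D, ∀ x : h.domain, H x = h x := by
  obtain ⟨m, hle, hmax⟩ := zorn_le_nonempty₀ {h' | h'.PreservesSolvability ∧ h ≤ h'}
    (fun c hcS hc g hg => ⟨LinearPMap.sSup c hc.directedOn,
      ⟨.sSup ⟨g, hg⟩ hc.directedOn fun h' hh' => (hcS hh').1,
        (hcS hg).2.trans (LinearPMap.le_sSup _ hg)⟩,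
      fun _ => LinearPMap.le_sSup _⟩) h ⟨hh, le_rfl⟩
  have htop : m.domain = ⊤ := by
    refine Submodule.eq_top_iff'.mpr fun b => ?_
    obtain ⟨d, hd⟩ := hmax.1.1.exists_forall_admits b
    obtain ⟨h', hh', hmh', hb⟩ := exists_le_preservesSolvability_of_forall_admits hd
    exact (hmax.2 ⟨hh', hle.trans hmh'⟩ hmh').1 hb
  exact ⟨m.toFun ∘ₗ (LinearEquiv.ofTop _ htop).symm.toLinearMap, fun x => (hle.2 rfl).symm⟩

end LinearPMap

theorem IsPureMono.preservesSolvability {R A B D : Type u} [CommRing R] [AddCommGroup A]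
    [Module R A] [AddCommGroup B] [Module R B] [AddCommGroup D] [Module R D] {f : A →ₗ[R] B}
    (hf : IsPureMono R f) (g : A →ₗ[R] D) :
    LinearPMap.PreservesSolvability
      ⟨LinearMap.range f, g ∘ₗ (LinearEquiv.ofInjective f hf.1).symm.toLinearMap⟩ := by
  intro ι κ _ _ r c ⟨x, hx⟩
  let a j := (LinearEquiv.ofInjective f hf.1).symm (c j)
  have hfa (j : κ) : f (a j) = c j := LinearEquiv.ofInjective_symm_apply _ _
  obtain ⟨y, hy⟩ := LinearMap.exists_sum_smul_eq_of_rTensor_injective f hf.2 r a x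
    fun j => (hx j).trans (hfa j).symm
  refine ⟨g ∘ y, fun j => ?_⟩
  simp only [Function.comp_apply, ← map_smul, ← map_sum, hy]
  rfl

theorem artinian_pureInjective_general (R : Type u) [CommRing R]
    (M : Type u) [AddCommGroup M] [Module R M] [IsArtinian R M] :
    IsPureInjective R M := by
  intro A B _ _ _ _ f hf g
  obtain ⟨H, hH⟩ := (hf.preservesSolvability g).exists_linearMap_extends
  refine ⟨H, LinearMap.ext fun a => ?_⟩
  exact (hH ⟨f a, LinearMap.mem_range_self f a⟩).trans
    (congrArg g ((LinearEquiv.ofInjective f hf.1).symm_apply_apply a))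

theorem artinian_pureInjective (R : Type u) [CommRing R] [IsNoetherianRing R]
    (M : Type u) [AddCommGroup M] [Module R M] [IsArtinian R M] :
    IsPureInjective R M :=
  artinian_pureInjective_general R M
end

section
/- Let N be a submodule of an R-module M. The inclusion i: N → M is a pure monomorphism if and only if i ⊗ id_T : N ⊗_R T → M ⊗_R T is injective for every R-algebra T which is finitely presented as an R-module. -/
universe u

section Helpers

open TensorProduct

variable {R : Type u} [CommRing R]

/-- If `i` admits a linear retraction, then `lTensor Q i` is injective. -/
lemma lTensor_injective_of_retract {A B Q : Type u} [AddCommGroup A] [Module R A]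
    [AddCommGroup B] [Module R B] [AddCommGroup Q] [Module R Q]
    (i : A →ₗ[R] B) (r : B →ₗ[R] A) (h : r ∘ₗ i = LinearMap.id) :
    Function.Injective (LinearMap.lTensor Q i) := by
  have hli : Function.LeftInverse (LinearMap.lTensor Q r) (LinearMap.lTensor Q i) := fun z => by
    rw [← LinearMap.comp_apply, ← LinearMap.lTensor_comp, h, LinearMap.lTensor_id,
      LinearMap.id_apply]
  exact hli.injective

/-- Finite presentation transfers along linear equivalences. -/
lemma finitePresentation_of_linearEquiv {A B : Type u} [AddCommGroup A] [Module R A]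
    [AddCommGroup B] [Module R B] [Module.FinitePresentation R A] (e : A ≃ₗ[R] B) :
    Module.FinitePresentation R B :=
  Module.finitePresentation_of_surjective e.toLinearMap e.surjective
    (by rw [LinearEquiv.ker]; exact Submodule.fg_bot)

/-- A product of finitely presented modules is finitely presented. -/
lemma finitePresentation_prod {A B : Type u} [AddCommGroup A] [Module R A]
    [AddCommGroup B] [Module R B] [Module.FinitePresentation R A]
    [Module.FinitePresentation R B] :
    Module.FinitePresentation R (A × B) := by
  obtain ⟨na, πa, hπa⟩ := Module.Finite.exists_fin' R A
  obtain ⟨nb, πb, hπb⟩ := Module.Finite.exists_fin' R B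
  have hka : (LinearMap.ker πa).FG := Module.FinitePresentation.fg_ker πa hπa
  have hkb : (LinearMap.ker πb).FG := Module.FinitePresentation.fg_ker πb hπb
  have hsurj : Function.Surjective (πa.prodMap πb) := hπa.prodMap hπb
  refine Module.finitePresentation_of_free_of_surjective (πa.prodMap πb) hsurj ?_
  rw [LinearMap.ker_prodMap]
  exact Submodule.FG.prod hka hkb

/-- If tensoring with every `R`-algebra that is finitely presented as a module is injective,
then tensoring with every finitely presented module is injective.  This uses the trivial
square-zero extension. -/
lemma rTensor_injective_of_fp_algebras {M N : Type u} [AddCommGroup M] [Module R M]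
    [AddCommGroup N] [Module R N] (f : N →ₗ[R] M)
    (H : ∀ (T : Type u) [CommRing T] [Algebra R T], Module.FinitePresentation R T →
      Function.Injective (LinearMap.rTensor T f))
    (L : Type u) [AddCommGroup L] [Module R L] (hL : Module.FinitePresentation R L) :
    Function.Injective (LinearMap.rTensor L f) := by
  letI : Module Rᵐᵒᵖ L := Module.compHom L ((RingHom.id R).fromOpposite mul_comm)
  haveI : IsCentralScalar R L := ⟨fun r m => rfl⟩
  haveI := hL
  set T := TrivSqZeroExt R L with hT
  have e : (R × L) ≃ₗ[R] T := LinearEquiv.refl R (R × L)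
  haveI : Module.FinitePresentation R (R × L) := finitePresentation_prod
  haveI : Module.FinitePresentation R T := finitePresentation_of_linearEquiv e
  -- split `L` off `T` using `inr` and `snd`
  set i : L →ₗ[R] T := TrivSqZeroExt.inrHom R L with hi
  set rr : T →ₗ[R] L := TrivSqZeroExt.sndHom R L with hrr
  have hri : rr ∘ₗ i = LinearMap.id := by
    ext w; exact TrivSqZeroExt.snd_inr R w
  have hinj : Function.Injective ((i.lTensor M) ∘ₗ (f.rTensor L)) := by
    rw [LinearMap.lTensor_comp_rTensor, ← LinearMap.rTensor_comp_lTensor, LinearMap.coe_comp]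
    exact (H T inferInstance).comp (lTensor_injective_of_retract i rr hri)
  rw [LinearMap.coe_comp] at hinj
  exact hinj.of_comp

lemma lTensor_exact_ker_subtype {A B Q : Type u} [AddCommGroup A] [Module R A]
    [AddCommGroup B] [Module R B] [AddCommGroup Q] [Module R Q]
    (g : A →ₗ[R] B) (hg : Function.Surjective g) :
    Function.Exact (LinearMap.lTensor Q (LinearMap.ker g).subtype) (LinearMap.lTensor Q g) :=
  lTensor_exact Q g.exact_subtype_ker_map hg

set_option maxHeartbeats 1000000 in
lemma rTensor_injective_of_fp_modules {M N : Type u} [AddCommGroup M] [Module R M]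
    [AddCommGroup N] [Module R N] (f : N →ₗ[R] M)
    (H : ∀ (L : Type u) [AddCommGroup L] [Module R L], Module.FinitePresentation R L →
      Function.Injective (LinearMap.rTensor L f))
    (L : Type u) [AddCommGroup L] [Module R L] :
    Function.Injective (LinearMap.rTensor L f) := by
  classical
  rw [injective_iff_map_eq_zero]
  intro x hx
  -- present `L` as a quotient of the free module `L →₀ R`
  obtain ⟨π, hπ⟩ : ∃ π : (L →₀ R) →ₗ[R] L, Function.Surjective π :=
    ⟨_, Finsupp.linearCombination_id_surjective R L⟩
  obtain ⟨x', rfl⟩ := LinearMap.lTensor_surjective N hπ x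
  have hy0 : (π.lTensor M) ((f.rTensor (L →₀ R)) x') = 0 := by
    rw [← LinearMap.comp_apply, LinearMap.lTensor_comp_rTensor,
      ← LinearMap.rTensor_comp_lTensor, LinearMap.comp_apply, hx]
  have hex := lTensor_exact_ker_subtype (Q := M) π hπ
  obtain ⟨z, hz⟩ := (hex _).mp hy0
  -- finite data
  obtain ⟨sx, hsx⟩ := TensorProduct.exists_finset x'
  obtain ⟨sz, hsz⟩ := TensorProduct.exists_finset z
  set s : Finset L :=
    sx.sup (fun p => p.2.support) ∪ sz.sup (fun q => (q.2 : L →₀ R).support) with hs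
  have hsupp1 : ∀ p ∈ sx, ↑p.2.support ⊆ (↑s : Set L) := by
    intro p hp
    refine subset_trans ?_ (Finset.coe_subset.mpr Finset.subset_union_left)
    exact Finset.coe_subset.mpr (Finset.le_sup (f := fun p => p.2.support) hp)
  have hsupp2 : ∀ q ∈ sz, ↑(q.2 : L →₀ R).support ⊆ (↑s : Set L) := by
    intro q hq
    refine subset_trans ?_ (Finset.coe_subset.mpr Finset.subset_union_right)
    exact Finset.coe_subset.mpr (Finset.le_sup (f := fun q => (q.2 : L →₀ R).support) hq)
  -- the finitely generated free module on `s`, with inclusion `j` and retraction `ρ`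
  set j : ((↑s : Set L) →₀ R) →ₗ[R] (L →₀ R) := Finsupp.lmapDomain R R Subtype.val with hj
  set ρ : (L →₀ R) →ₗ[R] ((↑s : Set L) →₀ R) :=
    Finsupp.lcomapDomain Subtype.val Subtype.val_injective with hρ
  have hjρ : ∀ w : L →₀ R, ↑w.support ⊆ (↑s : Set L) → j (ρ w) = w := by
    intro w hw
    show Finsupp.mapDomain Subtype.val (Finsupp.comapDomain Subtype.val w _) = w
    exact Finsupp.mapDomain_comapDomain _ Subtype.val_injective w (by rwa [Subtype.range_coe])
  have hρj : ρ ∘ₗ j = LinearMap.id := by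
    ext a b
    simp [hj, hρ, Finsupp.lcomapDomain, Finsupp.mapDomain_single, Finsupp.single_apply,
      Subtype.val_injective.eq_iff, Finsupp.comapDomain_apply]
  -- the relations
  set gens : Finset ((↑s : Set L) →₀ R) :=
    sz.attach.image (fun q => ρ (q.1.2 : L →₀ R)) with hgens
  set K₀ : Submodule R ((↑s : Set L) →₀ R) := Submodule.span R (↑gens : Set _) with hK₀
  haveI : Module.FinitePresentation R (((↑s : Set L) →₀ R) ⧸ K₀) := by
    refine Module.finitePresentation_of_surjective K₀.mkQ (Submodule.mkQ_surjective _) ?_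
    rw [Submodule.ker_mkQ]
    exact ⟨gens, rfl⟩
  -- the induced map to `L`
  have hKker : K₀ ≤ LinearMap.ker (π ∘ₗ j) := by
    rw [hK₀, Submodule.span_le]
    intro w hw
    simp only [hgens, Finset.coe_image, Set.mem_image, Finset.mem_coe, Finset.mem_attach] at hw
    obtain ⟨q, -, rfl⟩ := hw
    have h1 : (q.1.2 : L →₀ R) ∈ LinearMap.ker π := q.1.2.2
    simp only [LinearMap.mem_ker, LinearMap.comp_apply, SetLike.mem_coe]
    rw [hjρ _ (hsupp2 q.1 q.2)]
    exact h1
  set u : (((↑s : Set L) →₀ R) ⧸ K₀) →ₗ[R] L := K₀.liftQ (π ∘ₗ j) hKker with hu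
  -- lift `x'` and `z` to tensors with the free module on `s`
  set x₀' : N ⊗[R] ((↑s : Set L) →₀ R) :=
    ∑ p ∈ sx.attach, p.1.1 ⊗ₜ[R] ρ p.1.2 with hx₀'def
  have hx₀' : (LinearMap.lTensor N j) x₀' = x' := by
    rw [hx₀'def, map_sum, hsx, ← Finset.sum_attach sx (fun p => p.1 ⊗ₜ[R] p.2)]
    refine Finset.sum_congr rfl fun p _ => ?_
    rw [LinearMap.lTensor_tmul, hjρ _ (hsupp1 p.1 p.2)]
  set z₀ : M ⊗[R] ((↑s : Set L) →₀ R) :=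
    ∑ q ∈ sz.attach, q.1.1 ⊗ₜ[R] ρ (q.1.2 : L →₀ R) with hz₀def
  have hz₀ : (LinearMap.lTensor M j) z₀ = (f.rTensor (L →₀ R)) x' := by
    rw [hz₀def, map_sum, ← hz, hsz, map_sum,
      ← Finset.sum_attach sz (fun q => (LinearMap.lTensor M (LinearMap.ker π).subtype)
        (q.1 ⊗ₜ[R] q.2))]
    refine Finset.sum_congr rfl fun q _ => ?_
    rw [LinearMap.lTensor_tmul, LinearMap.lTensor_tmul, hjρ _ (hsupp2 q.1 q.2)]
    rfl
  -- `lTensor M j` is injective since `j` is a split injection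
  have hinjF : Function.Injective (LinearMap.lTensor M j) :=
    lTensor_injective_of_retract j ρ hρj
  have hkey : (f.rTensor _) x₀' = z₀ := by
    apply hinjF
    rw [hz₀, ← hx₀', ← LinearMap.comp_apply, LinearMap.lTensor_comp_rTensor,
      ← LinearMap.rTensor_comp_lTensor, LinearMap.comp_apply]
  -- push to the quotient
  set x₀ : N ⊗[R] (((↑s : Set L) →₀ R) ⧸ K₀) := (LinearMap.lTensor N K₀.mkQ) x₀' with hx₀def
  have hx₀0 : (f.rTensor _) x₀ = 0 := by
    rw [hx₀def, ← LinearMap.comp_apply, LinearMap.rTensor_comp_lTensor,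
      ← LinearMap.lTensor_comp_rTensor, LinearMap.comp_apply, hkey, hz₀def, map_sum]
    refine Finset.sum_eq_zero fun q _ => ?_
    have hq : ρ (q.1.2 : L →₀ R) ∈ K₀ := by
      rw [hK₀]
      refine Submodule.subset_span ?_
      simp only [hgens, Finset.coe_image, Set.mem_image, Finset.mem_coe]
      exact ⟨q, Finset.mem_attach _ _, rfl⟩
    rw [LinearMap.lTensor_tmul, Submodule.mkQ_apply, (Submodule.Quotient.mk_eq_zero _).mpr hq,
      TensorProduct.tmul_zero]
  have hx₀z : x₀ = 0 :=
    (injective_iff_map_eq_zero _).mp (H _ inferInstance) x₀ hx₀0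
  -- conclude
  have hcomm : π ∘ₗ j = u ∘ₗ K₀.mkQ := (K₀.liftQ_mkQ _ _).symm
  rw [← hx₀', ← LinearMap.comp_apply, ← LinearMap.lTensor_comp, hcomm,
    LinearMap.lTensor_comp, LinearMap.comp_apply, ← hx₀def, hx₀z, map_zero]

end Helpers

theorem pure_iff_injective_tensor_finitelyPresented_algebras (R : Type u) [CommRing R]
    (M : Type u) [AddCommGroup M] [Module R M] (N : Submodule R M) :
    IsPureMono R N.subtype ↔
      ∀ (T : Type u) [CommRing T] [Algebra R T], Module.FinitePresentation R T →
        Function.Injective (LinearMap.rTensor T N.subtype) := by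
  constructor
  · intro h T _ _ _
    exact h.2 T
  · intro H
    refine ⟨N.injective_subtype, fun L _ _ => ?_⟩
    exact rTensor_injective_of_fp_modules N.subtype
      (fun L' _ _ hL' => rTensor_injective_of_fp_algebras N.subtype H L' hL') L
end

section
/- For any R-module M and any injective R-module E, the R-module Hom_R(M, E) is pure injective. -/
universe u

theorem hom_into_injective_pureInjective (R : Type u) [CommRing R] (M E : Type u)
    [AddCommGroup M] [Module R M] [AddCommGroup E] [Module R E]
    (hE : Module.Injective R E) :
    IsPureInjective R (M →ₗ[R] E) := by
  intro A B _ _ _ _ f hf g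
  obtain ⟨H, hH⟩ := hE.out (LinearMap.rTensor M f) (hf.2 M) (TensorProduct.lift g)
  refine ⟨TensorProduct.curry H, ?_⟩
  ext a m
  simpa using hH (a ⊗ₜ m)
end
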